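/- arXiv:1808.06995 — 5 statements merged into one kernel-verified Lean document; each statement's English description precedes it below -/
import Mathlib

section
/- For a real number a with |a|<1, the area of the polar set of the unit disk centered at (a,0) is greater than or equal to the area of the polar set of the unit disk centered at the origin (which is π), with equality if and only if a=0. -/
open MeasureTheory Set

private lemma diag_det (c1 c2 : ℝ) :
    LinearMap.det (LinearMap.prodMap (c1 • (LinearMap.id : ℝ →ₗ[ℝ] ℝ))
      (c2 • (LinearMap.id : ℝ →ₗ[ℝ] ℝ))) = c1 * c2 := by
  rw [← LinearMap.det_toMatrix (Module.Basis.finTwoProd ℝ), Matrix.det_fin_two]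
  simp [LinearMap.toMatrix_apply, Module.Basis.finTwoProd]

private lemma vol_unit_disk :
    volume {p : ℝ × ℝ | p.1 ^ 2 + p.2 ^ 2 ≤ 1} = ENNReal.ofReal Real.pi := by
  have hm : MeasurableSet {p : ℝ × ℝ | p.1 ^ 2 + p.2 ^ 2 ≤ 1} :=
    measurableSet_le (by fun_prop) measurable_const
  have := Complex.volume_preserving_equiv_real_prod.measure_preimage hm.nullMeasurableSet
  have hpre : Complex.measurableEquivRealProd ⁻¹' {p : ℝ × ℝ | p.1 ^ 2 + p.2 ^ 2 ≤ 1}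
      = Metric.closedBall (0 : ℂ) 1 := by
    ext z
    simp only [Set.mem_preimage, Set.mem_setOf_eq, Metric.mem_closedBall,
      Complex.dist_eq, sub_zero, Complex.measurableEquivRealProd_apply]
    rw [Complex.norm_def, Complex.normSq_apply, Real.sqrt_le_one]
    constructor <;> intro h <;> nlinarith
  rw [hpre] at this
  rw [← this, Complex.volume_closedBall]
  simp [← NNReal.coe_real_pi]
lemma polar_eq_ellipse (a : ℝ) (ha : |a| < 1) :
    {p : ℝ × ℝ | ∀ x : ℝ × ℝ, (x.1 - a) ^ 2 + x.2 ^ 2 ≤ 1 → p.1 * x.1 + p.2 * x.2 ≤ 1} =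
    (fun p : ℝ × ℝ => ((1 - a ^ 2) * p.1 + a, Real.sqrt (1 - a ^ 2) * p.2)) ⁻¹'
      {p : ℝ × ℝ | p.1 ^ 2 + p.2 ^ 2 ≤ 1} := by
  have ha2 : (0:ℝ) < 1 - a ^ 2 := by nlinarith [abs_nonneg a, sq_abs a, abs_lt.1 ha]
  have hs : Real.sqrt (1 - a ^ 2) ^ 2 = 1 - a ^ 2 := Real.sq_sqrt ha2.le
  ext p
  simp only [Set.mem_setOf_eq, Set.mem_preimage]
  constructor
  · intro hp
    -- key: a * p.1 + ‖p‖ ≤ 1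
    have key : a * p.1 + Real.sqrt (p.1 ^ 2 + p.2 ^ 2) ≤ 1 := by
      set r := Real.sqrt (p.1 ^ 2 + p.2 ^ 2) with hr
      have hrnn : 0 ≤ r := Real.sqrt_nonneg _
      have hr2 : r ^ 2 = p.1 ^ 2 + p.2 ^ 2 := Real.sq_sqrt (by positivity)
      rcases eq_or_lt_of_le hrnn with h0 | h0
      · have h1 : p.1 ^ 2 + p.2 ^ 2 = 0 := by rw [← hr2, ← h0]; ring
        have hp1 : p.1 = 0 := by nlinarith [sq_nonneg p.1, sq_nonneg p.2]
        have hp2 : p.2 = 0 := by nlinarith [sq_nonneg p.1, sq_nonneg p.2]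
        simp [hp1, ← h0]
      · have := hp (a + p.1 / r, p.2 / r) (by
          simp only
          have : (a + p.1 / r - a) ^ 2 + (p.2 / r) ^ 2 = (p.1 ^ 2 + p.2 ^ 2) / r ^ 2 := by
            field_simp; ring
          rw [this, ← hr2, div_self (by positivity)])
        simp only at this
        have hexp : p.1 * (a + p.1 / r) + p.2 * (p.2 / r) = a * p.1 + r := by
          field_simp
          nlinarith [hr2]
        linarith [hexp ▸ this]
    have hr2 : Real.sqrt (p.1 ^ 2 + p.2 ^ 2) ^ 2 = p.1 ^ 2 + p.2 ^ 2 :=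
      Real.sq_sqrt (by positivity)
    have hrnn : 0 ≤ Real.sqrt (p.1 ^ 2 + p.2 ^ 2) := Real.sqrt_nonneg _
    have hq : p.1 ^ 2 + p.2 ^ 2 ≤ (1 - a * p.1) ^ 2 := by nlinarith
    nlinarith [hq, hs]
  · intro hp x hx
    have hp' : ((1 - a ^ 2) * p.1 + a) ^ 2 + (Real.sqrt (1 - a ^ 2) * p.2) ^ 2 ≤ 1 := hp
    rw [mul_pow, hs] at hp'
    -- ellipse: (1-a²)p1² + 2ap1 + p2² ≤ 1
    have hell : (1 - a ^ 2) * p.1 ^ 2 + 2 * a * p.1 + p.2 ^ 2 ≤ 1 := by nlinarith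
    have h1 : a * p.1 < 1 := by
      by_contra h
      push_neg at h
      nlinarith [sq_nonneg p.1, sq_nonneg p.2]
    have hq : p.1 ^ 2 + p.2 ^ 2 ≤ (1 - a * p.1) ^ 2 := by nlinarith
    set u := x.1 - a with hu
    set v := x.2 with hv
    have huv : u ^ 2 + v ^ 2 ≤ 1 := hx
    have hcs : (p.1 * u + p.2 * v) ^ 2 ≤ (p.1 ^ 2 + p.2 ^ 2) * (u ^ 2 + v ^ 2) := by
      nlinarith [sq_nonneg (p.1 * v - p.2 * u)]
    have hpn : (0:ℝ) ≤ p.1 ^ 2 + p.2 ^ 2 := by positivity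
    have hsum : (p.1 * u + p.2 * v) ^ 2 ≤ (1 - a * p.1) ^ 2 := by
      calc (p.1 * u + p.2 * v) ^ 2 ≤ (p.1 ^ 2 + p.2 ^ 2) * (u ^ 2 + v ^ 2) := hcs
        _ ≤ (p.1 ^ 2 + p.2 ^ 2) * 1 := mul_le_mul_of_nonneg_left huv hpn
        _ = p.1 ^ 2 + p.2 ^ 2 := mul_one _
        _ ≤ (1 - a * p.1) ^ 2 := hq
    have hle : p.1 * u + p.2 * v ≤ 1 - a * p.1 := by
      nlinarith [sq_nonneg (p.1 * u + p.2 * v + (1 - a * p.1))]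
    have : p.1 * x.1 + p.2 * x.2 = a * p.1 + (p.1 * u + p.2 * v) := by
      simp only [hu, hv]; ring
    linarith [this ▸ (by linarith : a * p.1 + (p.1 * u + p.2 * v) ≤ 1)]

private lemma vol_polar (a : ℝ) (ha : |a| < 1) :
    (volume {p : ℝ × ℝ | ∀ x : ℝ × ℝ,
        (x.1 - a) ^ 2 + x.2 ^ 2 ≤ 1 → p.1 * x.1 + p.2 * x.2 ≤ 1}).toReal
      = ((1 - a ^ 2) * Real.sqrt (1 - a ^ 2))⁻¹ * Real.pi := by
  have ha2 : (0:ℝ) < 1 - a ^ 2 := by nlinarith [abs_nonneg a, sq_abs a, abs_lt.1 ha]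
  have hs : (0:ℝ) < Real.sqrt (1 - a ^ 2) := Real.sqrt_pos.2 ha2
  set L := LinearMap.prodMap ((1 - a ^ 2) • (LinearMap.id : ℝ →ₗ[ℝ] ℝ))
      (Real.sqrt (1 - a ^ 2) • (LinearMap.id : ℝ →ₗ[ℝ] ℝ)) with hL
  have hdet : LinearMap.det L = (1 - a ^ 2) * Real.sqrt (1 - a ^ 2) := diag_det _ _
  have hdet0 : LinearMap.det L ≠ 0 := by rw [hdet]; positivity
  rw [polar_eq_ellipse a ha]
  have hset : (fun p : ℝ × ℝ => ((1 - a ^ 2) * p.1 + a, Real.sqrt (1 - a ^ 2) * p.2)) ⁻¹'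
        {p : ℝ × ℝ | p.1 ^ 2 + p.2 ^ 2 ≤ 1}
      = L ⁻¹' ((fun q => q + ((a : ℝ), (0 : ℝ))) ⁻¹' {p : ℝ × ℝ | p.1 ^ 2 + p.2 ^ 2 ≤ 1}) := by
    ext p
    simp [hL, LinearMap.prodMap_apply, smul_eq_mul, Prod.ext_iff]
  rw [hset, Measure.addHaar_preimage_linearMap volume hdet0,
    measure_preimage_add_right volume _ _, vol_unit_disk, hdet,
    ← ENNReal.ofReal_mul (by positivity), ENNReal.toReal_ofReal (by positivity),
    abs_of_pos (by positivity)]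

/-- For |a| < 1, the area of the polar of the unit disk centered at (a,0) is at least that of the
polar of the unit disk centered at the origin (which is π), with equality iff a = 0. -/
theorem polar_area_shifted_disk_ge (a : ℝ) (ha : |a| < 1)
    (polarDisk : ℝ → Set (ℝ × ℝ))
    (hpolar : ∀ c : ℝ, polarDisk c =
      {p : ℝ × ℝ | ∀ x : ℝ × ℝ, (x.1 - c) ^ 2 + x.2 ^ 2 ≤ 1 → p.1 * x.1 + p.2 * x.2 ≤ 1}) :
    (volume (polarDisk 0)).toReal = Real.pi ∧
    Real.pi ≤ (volume (polarDisk a)).toReal ∧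
    ((volume (polarDisk a)).toReal = Real.pi ↔ a = 0) := by
  have h0 : (volume (polarDisk 0)).toReal = Real.pi := by
    rw [hpolar 0, vol_polar 0 (by norm_num)]
    norm_num
  have hva : (volume (polarDisk a)).toReal
      = ((1 - a ^ 2) * Real.sqrt (1 - a ^ 2))⁻¹ * Real.pi := by
    rw [hpolar a, vol_polar a ha]
  have ha2 : (0:ℝ) < 1 - a ^ 2 := by nlinarith [abs_nonneg a, sq_abs a, abs_lt.1 ha]
  have hsp : (0:ℝ) < Real.sqrt (1 - a ^ 2) := Real.sqrt_pos.2 ha2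
  set s := (1 - a ^ 2) * Real.sqrt (1 - a ^ 2) with hsdef
  have hs0 : 0 < s := by positivity
  have hs1 : s ≤ 1 := by
    have h1 : 1 - a ^ 2 ≤ 1 := by nlinarith [sq_nonneg a]
    have h2 : Real.sqrt (1 - a ^ 2) ≤ 1 := Real.sqrt_le_one.2 h1
    calc s ≤ 1 * Real.sqrt (1 - a ^ 2) :=
          mul_le_mul_of_nonneg_right h1 hsp.le
      _ ≤ 1 * 1 := by nlinarith
      _ = 1 := by norm_num
  refine ⟨h0, ?_, ?_⟩
  · rw [hva]
    have : (1:ℝ) ≤ s⁻¹ := (one_le_inv_iff₀).2 ⟨hs0, hs1⟩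
    nlinarith [Real.pi_pos]
  · rw [hva]
    constructor
    · intro h
      by_contra hne
      have ha2' : 1 - a ^ 2 < 1 := by
        have : 0 < a ^ 2 := by positivity
        linarith
      have h2 : Real.sqrt (1 - a ^ 2) ≤ 1 := Real.sqrt_le_one.2 (by linarith)
      have hslt : s < 1 := by
        calc s < 1 * Real.sqrt (1 - a ^ 2) :=
            mul_lt_mul_of_pos_right ha2' hsp
          _ ≤ 1 := by nlinarith
      have : (1:ℝ) < s⁻¹ := (one_lt_inv_iff₀).2 ⟨hs0, hslt⟩
      nlinarith [Real.pi_pos]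
    · intro h
      subst h
      simp only [hsdef]
      norm_num
end

section
/- Let F : [-1,1] → ℝ be continuous, differentiable on (-1,1), satisfying F(η) ≥ L|η| for all η ∈ (-1,1) and F(1) ≥ L, where L > 0. Suppose F attains a minimum value μ = F(η₀) < L at some interior point η₀ ∈ (-1,1). Then ∫₀¹ F(η) dη > μ + (L-μ)²/(2L). -/
/-! The function `max μ (L η)` is a lower bound for `F` on `(0, 1]` whose integral is exactly
`μ + (L - μ)² / (2L)`. The bound is strict at the kink `c = μ / L`: if `F c = μ`, then `F` would
touch both the constant `μ` and the line `L η` from above at `c`, forcing `F' c = 0` and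
`F' c = L` at once. -/

open Set Filter Topology intervalIntegral

theorem HasDerivAt.eq_of_eventuallyLE_of_eq {f g : ℝ → ℝ} {f' g' c : ℝ}
    (hf : HasDerivAt f f' c) (hg : HasDerivAt g g' c) (hle : g ≤ᶠ[𝓝 c] f) (heq : g c = f c) :
    f' = g' := by
  have hmin : IsLocalMin (fun x => f x - g x) c := by
    filter_upwards [hle] with x hx
    linarith
  linarith [hmin.hasDerivAt_eq_zero (hf.sub hg)]

theorem integral_max_const_mul {μ L : ℝ} (hL : 0 < L) (hμ0 : 0 ≤ μ) (hμL : μ ≤ L) :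
    ∫ x in (0 : ℝ)..1, max μ (L * x) = μ + (L - μ) ^ 2 / (2 * L) := by
  set c := μ / L
  have hLc : L * c = μ := mul_div_cancel₀ μ hL.ne'
  have hc0 : 0 ≤ c := div_nonneg hμ0 hL.le
  have hc1 : c ≤ 1 := (div_le_one hL).2 hμL
  have hcont : Continuous fun x => max μ (L * x) := by fun_prop
  have hleft : ∫ x in (0 : ℝ)..c, max μ (L * x) = ∫ _ in (0 : ℝ)..c, μ := by
    refine integral_congr fun x hx => max_eq_left ?_
    rw [uIcc_of_le hc0] at hx
    nlinarith [hx.2]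
  have hright : ∫ x in c..1, max μ (L * x) = ∫ x in c..1, L * x := by
    refine integral_congr fun x hx => max_eq_right ?_
    rw [uIcc_of_le hc1] at hx
    nlinarith [hx.1]
  rw [← integral_add_adjacent_intervals (b := c) (hcont.intervalIntegrable _ _)
    (hcont.intervalIntegrable _ _), hleft, hright, integral_const, integral_const_mul, integral_id]
  rw [← hLc]
  field_simp
  ring

theorem integral_gt_of_min_lt (L : ℝ) (hL : 0 < L) (F : ℝ → ℝ)
    (hFc : ContinuousOn F (Icc (-1) 1))
    (hFd : DifferentiableOn ℝ F (Ioo (-1) 1))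
    (hFlow : ∀ η ∈ Ioo (-1 : ℝ) 1, L * |η| ≤ F η)
    (hF1 : L ≤ F 1)
    (η₀ : ℝ) (hη₀ : η₀ ∈ Ioo (-1 : ℝ) 1)
    (hmin : ∀ η ∈ Icc (-1 : ℝ) 1, F η₀ ≤ F η)
    (hμ : F η₀ < L) :
    F η₀ + (L - F η₀) ^ 2 / (2 * L) < ∫ η in (0 : ℝ)..1, F η := by
  set μ := F η₀
  have hμ0 : 0 ≤ μ := (mul_nonneg hL.le (abs_nonneg η₀)).trans (hFlow η₀ hη₀)
  set c := μ / L
  have hLc : L * c = μ := mul_div_cancel₀ μ hL.ne'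
  have hc0 : 0 ≤ c := div_nonneg hμ0 hL.le
  have hcI : c ∈ Ioo (-1 : ℝ) 1 := ⟨by linarith, (div_lt_one hL).2 hμ⟩
  have hle : ∀ x ∈ Ioc (0 : ℝ) 1, max μ (L * x) ≤ F x := by
    rintro x ⟨hx0, hx1⟩
    refine max_le (hmin x ⟨by linarith, hx1⟩) ?_
    rcases hx1.eq_or_lt with rfl | hx1
    · simpa using hF1
    · simpa [abs_of_pos hx0] using hFlow x ⟨by linarith, hx1⟩
  have hlt : max μ (L * c) < F c := by
    rw [hLc, max_self]
    refine (hmin c (Ioo_subset_Icc_self hcI)).lt_of_ne fun hFc => hL.ne ?_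
    have hnhds : Ioo (-1 : ℝ) 1 ∈ 𝓝 c := Ioo_mem_nhds hcI.1 hcI.2
    have hF' := (hFd.differentiableAt hnhds).hasDerivAt
    have hconst := hF'.eq_of_eventuallyLE_of_eq (hasDerivAt_const c μ)
      (eventually_of_mem hnhds fun x hx => hmin x (Ioo_subset_Icc_self hx)) hFc
    have hline := hF'.eq_of_eventuallyLE_of_eq ((hasDerivAt_id c).const_mul L)
      (eventually_of_mem hnhds fun x hx => (mul_le_mul_of_nonneg_left (le_abs_self x) hL.le).trans
        (hFlow x hx)) (hLc.trans hFc)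
    simpa [hconst] using hline
  have := integral_lt_integral_of_continuousOn_of_le_of_exists_lt one_pos (by fun_prop)
    (hFc.mono (Icc_subset_Icc (by norm_num) le_rfl)) hle
    ⟨c, ⟨hc0, hcI.2.le⟩, hlt⟩
  rwa [integral_max_const_mul hL hμ0 hμ.le] at this
end

section
/- Let F : [-1,1] → ℝ be continuous, differentiable on (-1,1), even, with F(η) ≥ L|η| on (-1,1), F(-1) = F(1) ≥ L, where L > 0, and let b ∈ (0,1). If ∫₀¹ F(η)dη ≤ (L/2)(1 + 1/(1+b)²), then F attains a minimum at some point η̄ ∈ (-1,0] with F(η̄) < L/(1+b). -/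
open Set intervalIntegral

theorem exists_min_lt (L b : ℝ) (hL : 0 < L) (hb : b ∈ Ioo (0 : ℝ) 1) (F : ℝ → ℝ)
    (hFc : ContinuousOn F (Icc (-1) 1))
    (hFd : DifferentiableOn ℝ F (Ioo (-1) 1))
    (heven : ∀ η, F (-η) = F η)
    (hFlow : ∀ η ∈ Ioo (-1 : ℝ) 1, L * |η| ≤ F η)
    (hFeq : F (-1) = F 1) (hF1 : L ≤ F 1)
    (hint : (∫ η in (0 : ℝ)..1, F η) ≤ L / 2 * (1 + 1 / (1 + b) ^ 2)) :
    ∃ η₀ ∈ Ioc (-1 : ℝ) 0, (∀ η ∈ Icc (-1 : ℝ) 1, F η₀ ≤ F η) ∧ F η₀ < L / (1 + b) := by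
  obtain ⟨hb0, hb1⟩ := hb
  have h1b : (0:ℝ) < 1 + b := by linarith
  -- minimum point
  obtain ⟨x, hx, hxmin⟩ := (isCompact_Icc (a := (-1:ℝ)) (b := 1)).exists_isMinOn
    (nonempty_Icc.2 (by norm_num)) hFc
  have hxabs : |x| ≤ 1 := abs_le.2 ⟨hx.1, hx.2⟩
  set η₀ := -|x| with hη₀def
  have hη₀mem : η₀ ∈ Icc (-1:ℝ) 0 := ⟨neg_le_neg hxabs,
    neg_nonpos.2 (abs_nonneg x)⟩
  have hFη₀ : F η₀ = F x := by
    rcases abs_cases x with ⟨h, _⟩ | ⟨h, _⟩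
    · rw [hη₀def, h, heven]
    · rw [hη₀def, h, neg_neg]
  have hmin : ∀ η ∈ Icc (-1:ℝ) 1, F η₀ ≤ F η := fun η hη => hFη₀ ▸ hxmin hη
  -- key claim
  set c := L / (1 + b) with hcdef
  set s := 1 / (1 + b) with hsdef
  have hs0 : (0:ℝ) < s := by positivity
  have hs1 : s < 1 := by
    rw [hsdef, div_lt_one h1b]; linarith
  have hcs : c = L * s := by rw [hcdef, hsdef]; ring
  have key : F η₀ < c := by
    by_contra hcon
    push_neg at hcon
    have hFc' : ∀ η ∈ Icc (-1:ℝ) 1, c ≤ F η := fun η hη => le_trans hcon (hmin η hη)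
    set g : ℝ → ℝ := fun η => max c (L * η) with hg
    have hgcont : Continuous g := continuous_const.max (continuous_const.mul continuous_id)
    -- F ≥ g on [0,1]
    have hFg : ∀ η ∈ Icc (0:ℝ) 1, g η ≤ F η := by
      intro η hη
      have h1 : c ≤ F η := hFc' η ⟨by linarith [hη.1], hη.2⟩
      have h2 : L * η ≤ F η := by
        rcases lt_or_eq_of_le hη.2 with h | h
        · have := hFlow η ⟨by linarith [hη.1], h⟩
          rwa [abs_of_nonneg hη.1] at this
        · rw [h]; simpa using hF1
      exact max_le h1 h2
    -- compute ∫ g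
    have hint_g : (∫ η in (0:ℝ)..1, g η) = L / 2 * (1 + 1 / (1 + b) ^ 2) := by
      have hsplit : (∫ η in (0:ℝ)..1, g η) =
          (∫ η in (0:ℝ)..s, g η) + ∫ η in s..(1:ℝ), g η :=
        (integral_add_adjacent_intervals
          (hgcont.intervalIntegrable _ _) (hgcont.intervalIntegrable _ _)).symm
      have h1 : (∫ η in (0:ℝ)..s, g η) = ∫ η in (0:ℝ)..s, c := by
        apply integral_congr
        intro η hη
        rw [uIcc_of_le hs0.le] at hη
        have : L * η ≤ c := by
          rw [hcs]; exact mul_le_mul_of_nonneg_left hη.2 hL.le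
        simp [hg, max_eq_left this]
      have h2 : (∫ η in s..(1:ℝ), g η) = ∫ η in s..(1:ℝ), L * η := by
        apply integral_congr
        intro η hη
        rw [uIcc_of_le hs1.le] at hη
        have : c ≤ L * η := by
          rw [hcs]; exact mul_le_mul_of_nonneg_left hη.1 hL.le
        simp [hg, max_eq_right this]
      rw [hsplit, h1, h2]
      rw [integral_const, intervalIntegral.integral_const_mul, integral_id]
      have hsq : s ^ 2 = 1 / (1 + b) ^ 2 := by
        rw [hsdef]; field_simp
      rw [smul_eq_mul, ← hsq, hcs]
      ring
    -- F = g on [0,1]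
    have hFcon01 : ContinuousOn F (Icc 0 1) :=
      hFc.mono (Icc_subset_Icc (by norm_num) le_rfl)
    have hEq : ∀ η ∈ Icc (0:ℝ) 1, F η = g η := by
      by_contra hne
      push_neg at hne
      obtain ⟨y, hy, hyne⟩ := hne
      have hlt : (∫ η in (0:ℝ)..1, g η) < ∫ η in (0:ℝ)..1, F η := by
        apply integral_lt_integral_of_continuousOn_of_le_of_exists_lt one_pos
          hgcont.continuousOn hFcon01 (fun z hz => hFg z ⟨hz.1.le, hz.2⟩)
        exact ⟨y, hy, lt_of_le_of_ne (hFg y hy) (Ne.symm hyne)⟩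
      rw [hint_g] at hlt
      linarith
    -- contradiction via differentiability at s
    have hsmem : s ∈ Ioo (-1:ℝ) 1 := ⟨by linarith, hs1⟩
    have hd : HasDerivAt F (deriv F s) s :=
      (hFd.differentiableAt (isOpen_Ioo.mem_nhds hsmem)).hasDerivAt
    -- left: F = c on Icc 0 s
    have hleft : HasDerivWithinAt F 0 (Icc 0 s) s := by
      apply (hasDerivWithinAt_const s (Icc (0:ℝ) s) c).congr
      · intro z hz
        rw [hEq z ⟨hz.1, hz.2.trans hs1.le⟩]
        have : L * z ≤ c := by rw [hcs]; exact mul_le_mul_of_nonneg_left hz.2 hL.le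
        simp [hg, max_eq_left this]
      · rw [hEq s ⟨hs0.le, hs1.le⟩]
        simp [hg, hcs]
    -- right: F = L * η on Icc s 1
    have hright : HasDerivWithinAt F L (Icc s 1) s := by
      have hid : HasDerivWithinAt (fun η : ℝ => L * η) (L * 1) (Icc s 1) s :=
        ((hasDerivAt_id s).const_mul L).hasDerivWithinAt
      rw [mul_one] at hid
      apply hid.congr
      · intro z hz
        rw [hEq z ⟨hs0.le.trans hz.1, hz.2⟩]
        have : c ≤ L * z := by rw [hcs]; exact mul_le_mul_of_nonneg_left hz.1 hL.le
        simp [hg, max_eq_right this]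
      · rw [hEq s ⟨hs0.le, hs1.le⟩]
        simp [hg, hcs]
    have hudl : UniqueDiffWithinAt ℝ (Icc (0:ℝ) s) s :=
      uniqueDiffOn_Icc hs0 s ⟨hs0.le, le_rfl⟩
    have hudr : UniqueDiffWithinAt ℝ (Icc s (1:ℝ)) s :=
      uniqueDiffOn_Icc hs1 s ⟨le_rfl, hs1.le⟩
    have e1 : deriv F s = 0 := by
      rw [← (hd.hasDerivWithinAt.derivWithin hudl), hleft.derivWithin hudl]
    have e2 : deriv F s = L := by
      rw [← (hd.hasDerivWithinAt.derivWithin hudr), hright.derivWithin hudr]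
    rw [e1] at e2
    exact hL.ne e2
  -- η₀ ≠ -1
  have hne : -1 < η₀ := by
    rcases lt_or_eq_of_le hη₀mem.1 with h | h
    · exact h
    · exfalso
      have : F η₀ = F 1 := by rw [← h, hFeq]
      have hc_lt : c < L := by
        rw [hcdef, div_lt_iff₀ h1b]; nlinarith
      rw [this] at key
      linarith
  exact ⟨η₀, ⟨hne, hη₀mem.2⟩, hmin, key⟩
end

section
/- Let F : (-1,1) → ℝ be smooth with τ(η) := F(η) − ηF'(η) > 0, let b ∈ (0,1), and set F_b(η) = F(η) + bT(η) with T' = τ, T(0)=0. Suppose η̄ ∈ (-1,0] satisfies F'(η̄) = 0 and suppose there is a largest critical point η̂ of F_b in (-1, η̄). Then τ(η̂) < τ(η̄) = F(η̄). -/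
/-!
On `[η̂, η̄]` consider `g η = F η / (1 - b η)`, whose derivative is
`(F' + b τ) / (1 - b η)²`. This derivative is positive at `η̄` (where `F' = 0` and `τ = F > 0`)
and does not vanish on `(η̂, η̄)`, so by Darboux's theorem it is positive on `(η̂, η̄]` and `g`
increases. The critical point equation `F' = -b τ` at `η̂` gives `g η̂ = τ η̂`, while
`g η̄ ≤ F η̄` because `η̄ ≤ 0`.
-/

open Set

theorem strictMonoOn_Icc_of_hasDerivAt_ne_zero_of_pos {f f' : ℝ → ℝ} {a c : ℝ}
    (hf : ∀ x ∈ Icc a c, HasDerivAt f (f' x) x) (hne : ∀ x ∈ Ioo a c, f' x ≠ 0)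
    (hc : 0 < f' c) : StrictMonoOn f (Icc a c) := by
  have hne' : ∀ x ∈ Ioc a c, f' x ≠ 0 := fun x hx =>
    hx.2.eq_or_lt.elim (fun h => h ▸ hc.ne') (fun h => hne x ⟨hx.1, h⟩)
  have hpos : ∀ x ∈ Ioo a c, 0 < f' x := by
    intro x hx
    rcases hasDerivWithinAt_forall_lt_or_forall_gt_of_forall_ne (convex_Ioc a c)
      (fun y hy => (hf y (Ioc_subset_Icc_self hy)).hasDerivWithinAt) hne' with hneg | hpos
    · exact absurd (hneg c ⟨hx.1.trans hx.2, le_rfl⟩) hc.not_gt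
    · exact hpos x ⟨hx.1, hx.2.le⟩
  refine strictMonoOn_of_hasDerivWithinAt_pos (f' := f') (convex_Icc a c)
    (fun x hx => (hf x hx).continuousAt.continuousWithinAt) (fun x hx => ?_) (fun x hx => ?_)
  · rw [interior_Icc] at hx ⊢
    exact (hf x (Ioo_subset_Icc_self hx)).hasDerivWithinAt
  · rw [interior_Icc] at hx
    exact hpos x hx

theorem HasDerivAt.div_one_sub_mul {F : ℝ → ℝ} {f b x : ℝ} (hF : HasDerivAt F f x)
    (hx : 1 - b * x ≠ 0) :
    HasDerivAt (fun η => F η / (1 - b * η)) ((f + b * (F x - x * f)) / (1 - b * x) ^ 2) x := by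
  have hden : HasDerivAt (fun η => 1 - b * η) (-b) x := by
    simpa using ((hasDerivAt_id x).const_mul b).const_sub 1
  exact (hF.div hden hx).congr_deriv (by ring)

theorem return_time_at_largest_critical_point_general (F F' : ℝ → ℝ) (b : ℝ)
    (hb : b ∈ Ioo (0 : ℝ) 1)
    (hd : ∀ η ∈ Ioo (-1 : ℝ) 1, HasDerivAt F (F' η) η)
    (hτpos : ∀ η ∈ Ioo (-1 : ℝ) 1, 0 < F η - η * F' η)
    (ηbar : ℝ) (hηbar : ηbar ∈ Ioc (-1 : ℝ) 0) (hcritbar : F' ηbar = 0)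
    (ηhat : ℝ) (hηhat : ηhat ∈ Ioo (-1 : ℝ) ηbar)
    (hcrit : F' ηhat + b * (F ηhat - ηhat * F' ηhat) = 0)
    (hlargest : ∀ η ∈ Ioo ηhat ηbar, F' η + b * (F η - η * F' η) ≠ 0) :
    F ηhat - ηhat * F' ηhat < F ηbar ∧ F ηbar - ηbar * F' ηbar = F ηbar := by
  have hsub : Icc ηhat ηbar ⊆ Ioo (-1 : ℝ) 1 := fun x hx =>
    ⟨hηhat.1.trans_le hx.1, by linarith [hx.2, hηbar.2]⟩
  have hden : ∀ x ∈ Icc ηhat ηbar, 0 < 1 - b * x := fun x hx => by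
    nlinarith [hb.1, hx.2, hηbar.2]
  have hηhat_mem : ηhat ∈ Icc ηhat ηbar := left_mem_Icc.2 hηhat.2.le
  have hηbar_mem : ηbar ∈ Icc ηhat ηbar := right_mem_Icc.2 hηhat.2.le
  have hτbar : F ηbar - ηbar * F' ηbar = F ηbar := by rw [hcritbar, mul_zero, sub_zero]
  have hFbar : 0 < F ηbar := hτbar ▸ hτpos ηbar (hsub hηbar_mem)
  have hmono : StrictMonoOn (fun η => F η / (1 - b * η)) (Icc ηhat ηbar) :=
    strictMonoOn_Icc_of_hasDerivAt_ne_zero_of_pos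
      (fun x hx => (hd x (hsub hx)).div_one_sub_mul (hden x hx).ne')
      (fun x hx => div_ne_zero (hlargest x hx) (pow_pos (hden x (Ioo_subset_Icc_self hx)) 2).ne')
      (div_pos (by rw [hτbar, hcritbar, zero_add]; exact mul_pos hb.1 hFbar)
        (pow_pos (hden ηbar hηbar_mem) 2))
  have hghat : F ηhat / (1 - b * ηhat) = F ηhat - ηhat * F' ηhat := by
    rw [div_eq_iff (hden ηhat hηhat_mem).ne']
    linear_combination ηhat * hcrit
  refine ⟨?_, hτbar⟩
  calc F ηhat - ηhat * F' ηhat = F ηhat / (1 - b * ηhat) := hghat.symm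
    _ < F ηbar / (1 - b * ηbar) := hmono hηhat_mem hηbar_mem hηhat.2
    _ ≤ F ηbar := div_le_self hFbar.le (by nlinarith [hb.1, hηbar.2])

theorem return_time_at_largest_critical_point (F F' : ℝ → ℝ) (b : ℝ)
    (hb : b ∈ Ioo (0 : ℝ) 1)
    (hd : ∀ η ∈ Ioo (-1 : ℝ) 1, HasDerivAt F (F' η) η)
    (hF'c : ContinuousOn F' (Ioo (-1) 1))
    (hτpos : ∀ η ∈ Ioo (-1 : ℝ) 1, 0 < F η - η * F' η)
    (ηbar : ℝ) (hηbar : ηbar ∈ Ioc (-1 : ℝ) 0) (hcritbar : F' ηbar = 0)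
    (ηhat : ℝ) (hηhat : ηhat ∈ Ioo (-1 : ℝ) ηbar)
    (hcrit : F' ηhat + b * (F ηhat - ηhat * F' ηhat) = 0)
    (hlargest : ∀ η ∈ Ioo ηhat ηbar, F' η + b * (F η - η * F' η) ≠ 0) :
    F ηhat - ηhat * F' ηhat < F ηbar ∧ F ηbar - ηbar * F' ηbar = F ηbar :=
  return_time_at_largest_critical_point_general F F' b hb hd hτpos ηbar hηbar hcritbar ηhat hηhat
    hcrit hlargest
end

section
/- Let α = (1+a·r(s)·cos β)⁻¹ (r(s)cos β dθ + sin β ds) be a 1-form on ℝ/2πℤ × ℝ/2πℤ × (0,M/2), with r smooth and 1 + a·r(s)·cos β > 0 everywhere. Then α ∧ dα = r(s)/(1 + a·r(s)·cos β)² dθ ∧ dβ ∧ ds; in particular α is a contact form wherever r(s) > 0. -/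
open Set

/-!
Writing α = P dθ + R ds with P, R depending on β only, α ∧ dα = (P ∂_β R − R ∂_β P) dθ ∧ dβ ∧ ds,
so the coefficient is the Wronskian of P and R in β. Both share the denominator
D = 1 + a r cos β, and dividing two functions by a common factor divides their Wronskian by its
square; the Wronskian of r cos β and sin β is r (cos² β + sin² β) = r.
-/

theorem wronskian_div_div {f g h : ℝ → ℝ} {f' g' h' x : ℝ} (hf : HasDerivAt f f' x)
    (hg : HasDerivAt g g' x) (hh : HasDerivAt h h' x) (hx : h x ≠ 0) :
    f x / h x * deriv (fun y => g y / h y) x - g x / h x * deriv (fun y => f y / h y) x =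
      (f x * g' - g x * f') / h x ^ 2 := by
  rw [(hg.fun_div hh hx).deriv, (hf.fun_div hh hx).deriv]
  field_simp
  ring

/-- The coefficient of α ∧ dα for α = (1 + a r(s) cos β)⁻¹ (r(s) cos β dθ + sin β ds):
writing α = P dθ + R ds (no dβ component, coefficients independent of θ), one has
α ∧ dα = (P ∂R/∂β − R ∂P/∂β) dθ ∧ dβ ∧ ds = r(s)/(1 + a r(s) cos β)² dθ ∧ dβ ∧ ds,
and this coefficient is nonzero wherever r(s) > 0, so α is a contact form there. -/
theorem zermelo_contact_volume_form (M a : ℝ) (r : ℝ → ℝ)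
    (hden : ∀ s β : ℝ, 0 < 1 + a * r s * Real.cos β) :
    ∀ s ∈ Ioo (0 : ℝ) (M / 2), ∀ β : ℝ,
      ((r s * Real.cos β / (1 + a * r s * Real.cos β)) *
          deriv (fun b => Real.sin b / (1 + a * r s * Real.cos b)) β -
        (Real.sin β / (1 + a * r s * Real.cos β)) *
          deriv (fun b => r s * Real.cos b / (1 + a * r s * Real.cos b)) β
        = r s / (1 + a * r s * Real.cos β) ^ 2) ∧
      (0 < r s →
        (r s * Real.cos β / (1 + a * r s * Real.cos β)) *
            deriv (fun b => Real.sin b / (1 + a * r s * Real.cos b)) β -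
          (Real.sin β / (1 + a * r s * Real.cos β)) *
            deriv (fun b => r s * Real.cos b / (1 + a * r s * Real.cos b)) β ≠ 0) := by
  intro s _ β
  have hD : HasDerivAt (fun b => 1 + a * r s * Real.cos b) (a * r s * -Real.sin β) β :=
    ((Real.hasDerivAt_cos β).const_mul (a * r s)).const_add 1
  have hW := wronskian_div_div ((Real.hasDerivAt_cos β).const_mul (r s))
    (Real.hasDerivAt_sin β) hD (hden s β).ne'
  have hcoeff : (r s * Real.cos β / (1 + a * r s * Real.cos β)) *
          deriv (fun b => Real.sin b / (1 + a * r s * Real.cos b)) β -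
        (Real.sin β / (1 + a * r s * Real.cos β)) *
          deriv (fun b => r s * Real.cos b / (1 + a * r s * Real.cos b)) β
        = r s / (1 + a * r s * Real.cos β) ^ 2 := by
    rw [hW]
    congr 1
    linear_combination r s * Real.sin_sq_add_cos_sq β
  exact ⟨hcoeff, fun hr => hcoeff ▸ div_ne_zero hr.ne' (pow_ne_zero 2 (hden s β).ne')⟩
end
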